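/- Let Γ be a finite simple connected graph with Perron vector ν and C ⊆ V nonempty with C-local eigenvalues μ₀ = λ₀ > μ₁ > … > μ_{d_C}. Define the C-local Hoffman polynomial H_C = (‖ν‖²/(π₀(C)·‖ρC‖²))·∏_{l=1}^{d_C}(x − μ_l), where π₀(C) = ∏_{l=1}^{d_C}(μ₀ − μ_l). Then H_C(A)·ρC = ν. -/

import Mathlib

open Finset Polynomial BigOperators
open scoped Classical

noncomputable section

/-- The eigenspace of a real matrix `A` (viewed as an operator on Euclidean space)
for the value `μ`. -/
def eigSp {n : ℕ} (A : Matrix (Fin n) (Fin n) ℝ) (μ : ℝ) :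
    Submodule ℝ (EuclideanSpace ℝ (Fin n)) :=
  Module.End.eigenspace (Matrix.toEuclideanLin A) μ

/-- Orthogonal projection onto the `μ`-eigenspace of `A`. -/
def eigProj {n : ℕ} (A : Matrix (Fin n) (Fin n) ℝ) (μ : ℝ) (v : EuclideanSpace ℝ (Fin n)) :
    EuclideanSpace ℝ (Fin n) :=
  ((eigSp A μ).orthogonalProjection v : EuclideanSpace ℝ (Fin n))

/-- The weighted characteristic vector `ρS = Σ_{i∈S} ν_i e_i`. -/
def rho {n : ℕ} (ν : EuclideanSpace ℝ (Fin n)) (S : Finset (Fin n)) :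
    EuclideanSpace ℝ (Fin n) :=
  WithLp.toLp 2 (fun i => if i ∈ S then ν i else 0)

/-- The unit vector `e_S = ρS / ‖ρS‖`. -/
def unitVec {n : ℕ} (ν : EuclideanSpace ℝ (Fin n)) (S : Finset (Fin n)) :
    EuclideanSpace ℝ (Fin n) :=
  (‖rho ν S‖)⁻¹ • rho ν S

/-- The `S`-local multiplicity of `μ`: `m_S(μ) = ‖E_μ e_S‖²`. -/
def mloc {n : ℕ} (A : Matrix (Fin n) (Fin n) ℝ) (ν : EuclideanSpace ℝ (Fin n))
    (S : Finset (Fin n)) (μ : ℝ) : ℝ :=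
  ‖eigProj A μ (unitVec ν S)‖ ^ 2

/-- The `S`-local spectrum: the set of `μ` whose eigenspace sees `ρS`. -/
def evloc {n : ℕ} (A : Matrix (Fin n) (Fin n) ℝ) (ν : EuclideanSpace ℝ (Fin n))
    (S : Finset (Fin n)) : Set ℝ :=
  {μ | eigProj A μ (rho ν S) ≠ 0}

/-- Distance from a vertex `i` to a set of vertices `S`. -/
def dSet {n : ℕ} (G : SimpleGraph (Fin n)) (S : Finset (Fin n)) (i : Fin n) : ℕ :=
  sInf {k | ∃ j ∈ S, G.dist i j = k}

/-- Eccentricity (covering radius) of a vertex set `S`. -/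
def eccS {n : ℕ} (G : SimpleGraph (Fin n)) (S : Finset (Fin n)) : ℕ :=
  Finset.univ.sup (dSet G S)

/-- The `k`-th subconstituent `S_k = {i : dist(i,S) = k}`. -/
def subcons {n : ℕ} (G : SimpleGraph (Fin n)) (S : Finset (Fin n)) (k : ℕ) :
    Finset (Fin n) :=
  Finset.univ.filter (fun i => dSet G S i = k)

/-- `p(A)·v` for a polynomial `p`, a matrix `A` and a Euclidean vector `v`. -/
def aevalVec {n : ℕ} (A : Matrix (Fin n) (Fin n) ℝ) (p : Polynomial ℝ)
    (v : EuclideanSpace ℝ (Fin n)) : EuclideanSpace ℝ (Fin n) :=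
  WithLp.toLp 2 ((Polynomial.aeval A p).mulVec v)

/-- Moment-like parameter `π_l = ∏_{h≠l} |μ_l − μ_h|` for an enumeration `μ`. -/
def piC {d : ℕ} (μ : Fin (d + 1) → ℝ) (l : Fin (d + 1)) : ℝ :=
  ∏ h ∈ Finset.univ.erase l, |μ l - μ h|

/-!
The adjacency matrix `A` is symmetric, so its eigenspaces span the space orthogonally, and
`p(A) ρC = p(μ₀) · E_{μ₀} ρC` for `p = ∏_{l ≥ 1} (X - μ_l)`: every other local eigenvalue is a root
of `p`, and the eigenspaces of the non-local eigenvalues do not see `ρC`. Perron–Frobenius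
supplies the rest. Comparing an eigenvector `w` with `ν` at a vertex maximizing `|w_i| / ν_i`
bounds every eigenvalue by `λ₀`, while `E_{λ₀} ρC ≠ 0` because `⟨ν, ρC⟩ = ‖ρC‖² > 0`; hence
`μ₀ = λ₀`. Connectedness makes the `λ₀`-eigenspace the line `ℝ ν`, so
`E_{λ₀} ρC = (‖ρC‖² / ‖ν‖²) ν` and `p(μ₀) = π₀(C)`.
-/

open scoped RealInnerProductSpace

namespace LinearMap.IsSymmetric

variable {E : Type*} [NormedAddCommGroup E] [InnerProductSpace ℝ E] {T : E →ₗ[ℝ] E}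

theorem aeval (hT : T.IsSymmetric) (p : ℝ[X]) : (Polynomial.aeval T p).IsSymmetric := by
  induction p using Polynomial.induction_on' with
  | add p q hp hq => rw [map_add]; exact hp.add hq
  | monomial k a =>
    intro x y
    simp only [aeval_monomial, Module.End.mul_apply, Module.algebraMap_end_apply,
      real_inner_smul_left, real_inner_smul_right, hT.pow k x y]

theorem aeval_apply_eq_eval_smul_starProjection [FiniteDimensional ℝ E] (hT : T.IsSymmetric)
    {p : ℝ[X]} {a : ℝ} {v : E}
    (hv : ∀ x ≠ a, p.eval x • (Module.End.eigenspace T x).starProjection v = 0) :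
    Polynomial.aeval T p v = p.eval a • (Module.End.eigenspace T a).starProjection v := by
  rw [← sub_eq_zero, ← Submodule.mem_bot ℝ, ← hT.orthogonalComplement_iSup_eigenspaces_eq_bot,
    ← Submodule.iInf_orthogonal, Submodule.mem_iInf]
  intro x u hu
  have hTu : T u = x • u := Module.End.mem_eigenspace_iff.mp hu
  rw [inner_sub_right, ← hT.aeval p u v, Module.End.aeval_apply_of_mem_apply_eq_smul hTu,
    real_inner_smul_left, real_inner_smul_right, sub_eq_zero]
  have hu_inner : ⟪u, v⟫ = ⟪u, (Module.End.eigenspace T x).starProjection v⟫ := by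
    rw [← Submodule.inner_starProjection_left_eq_right, Submodule.starProjection_eq_self_iff.mpr hu]
  rcases eq_or_ne x a with rfl | hxa
  · rw [hu_inner]
  · rw [hu_inner, ← inner_smul_right, hv x hxa, inner_zero_right,
      (hT.orthogonalFamily_eigenspaces.isOrtho hxa).inner_eq hu
        ((Module.End.eigenspace T a).starProjection_apply_mem v), mul_zero]

end LinearMap.IsSymmetric

namespace Matrix

variable {ι : Type*} [Fintype ι]

theorem abs_le_of_mulVec_eq_smul_of_pos {M : Matrix ι ι ℝ} (hM : ∀ i j, 0 ≤ M i j)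
    {ν : ι → ℝ} (hν : ∀ i, 0 < ν i) {r : ℝ} (hMν : M *ᵥ ν = r • ν)
    {w : ι → ℝ} (hw : w ≠ 0) {c : ℝ} (hMw : M *ᵥ w = c • w) : |c| ≤ r := by
  obtain ⟨j, hj⟩ : ∃ j, w j ≠ 0 := Function.ne_iff.mp hw
  obtain ⟨i, -, hi⟩ := exists_max_image univ (fun i => |w i| / ν i) ⟨j, mem_univ j⟩
  set t := |w i| / ν i
  have hbound : ∀ k, |w k| ≤ t * ν k := fun k => (div_le_iff₀ (hν k)).mp (hi k (mem_univ k))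
  have hwi : |w i| = t * ν i := (div_mul_cancel₀ _ (hν i).ne').symm
  have hwi_pos : 0 < |w i| := by
    have ht : 0 < t := lt_of_lt_of_le (div_pos (abs_pos.mpr hj) (hν j)) (hi j (mem_univ j))
    rw [hwi]; exact mul_pos ht (hν i)
  refine le_of_mul_le_mul_right ?_ hwi_pos
  calc |c| * |w i| = |(M *ᵥ w) i| := by rw [hMw, Pi.smul_apply, smul_eq_mul, abs_mul]
    _ ≤ ∑ k, M i k * |w k| := by
      simpa only [mulVec, dotProduct, abs_mul, abs_of_nonneg (hM i _)]
        using abs_sum_le_sum_abs (fun k => M i k * w k) univ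
    _ ≤ ∑ k, M i k * (t * ν k) :=
      sum_le_sum fun k _ => mul_le_mul_of_nonneg_left (hbound k) (hM i k)
    _ = t * (M *ᵥ ν) i := by simp only [mulVec, dotProduct, mul_sum, mul_left_comm]
    _ = r * |w i| := by rw [hMν, Pi.smul_apply, smul_eq_mul, hwi]; ring

end Matrix

namespace SimpleGraph

open Matrix

variable {V : Type*} [Fintype V] {G : SimpleGraph V} [DecidableRel G.Adj]

theorem eq_zero_of_adjMatrix_mulVec_eq_smul_of_nonneg (hG : G.Preconnected) {u : V → ℝ}
    (hu : 0 ≤ u) {r : ℝ} (hAu : G.adjMatrix ℝ *ᵥ u = r • u) {i : V} (hi : u i = 0) : u = 0 := by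
  have hstep : ∀ a b, G.Adj a b → u a = 0 → u b = 0 := by
    intro a b hab ha
    have hsum : ∑ k ∈ G.neighborFinset a, u k = 0 := by
      rw [← adjMatrix_mulVec_apply, hAu, Pi.smul_apply, ha, smul_zero]
    exact (sum_eq_zero_iff_of_nonneg fun k _ => hu k).mp hsum b
      ((mem_neighborFinset G a b).mpr hab)
  ext j
  induction (reachable_iff_reflTransGen i j).mp (hG i j) with
  | refl => exact hi
  | tail _ hab ih => exact hstep _ _ hab ih

theorem exists_eq_smul_of_adjMatrix_mulVec_eq_smul (hG : G.Connected) {ν : V → ℝ}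
    (hν : ∀ i, 0 < ν i) {r : ℝ} (hAν : G.adjMatrix ℝ *ᵥ ν = r • ν) {w : V → ℝ}
    (hAw : G.adjMatrix ℝ *ᵥ w = r • w) : ∃ t : ℝ, w = t • ν := by
  obtain ⟨i, -, hi⟩ :=
    exists_min_image univ (fun i => w i / ν i) (univ_nonempty_iff.mpr hG.nonempty)
  refine ⟨w i / ν i, sub_eq_zero.mp ?_⟩
  refine eq_zero_of_adjMatrix_mulVec_eq_smul_of_nonneg hG.preconnected (r := r) (i := i)
    (fun k => ?_) ?_ ?_
  · have := (le_div_iff₀ (hν k)).mp (hi k (mem_univ k))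
    simp only [Pi.zero_apply, Pi.sub_apply, Pi.smul_apply, smul_eq_mul]
    linarith
  · rw [Matrix.mulVec_sub, Matrix.mulVec_smul, hAw, hAν, smul_sub, smul_comm]
  · simp [div_mul_cancel₀ _ (hν i).ne']

end SimpleGraph

theorem EuclideanSpace.ne_zero_of_forall_pos {ι : Type*} [Nonempty ι] {v : EuclideanSpace ℝ ι}
    (hv : ∀ i, 0 < v i) : v ≠ 0 := by
  rintro rfl
  simpa using hv (Classical.arbitrary ι)

section LocalSpectrum

open Matrix

variable {n : ℕ}

theorem aevalVec_eq_aeval_toEuclideanLin (A : Matrix (Fin n) (Fin n) ℝ) (p : ℝ[X])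
    (v : EuclideanSpace ℝ (Fin n)) : aevalVec A p v = aeval (toEuclideanLin A) p v :=
  congrArg (· v) (aeval_algHom_apply (toLpLinAlgEquiv 2 : Matrix _ _ ℝ ≃ₐ[ℝ] _).toAlgHom A p).symm

theorem mem_eigSp_iff {A : Matrix (Fin n) (Fin n) ℝ} {μ : ℝ} {w : EuclideanSpace ℝ (Fin n)} :
    w ∈ eigSp A μ ↔ A *ᵥ w = μ • w := by
  rw [eigSp, Module.End.mem_eigenspace_iff, ← (WithLp.ofLp_injective 2).eq_iff]
  rfl

theorem eigProj_eq_starProjection (A : Matrix (Fin n) (Fin n) ℝ) (μ : ℝ)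
    (v : EuclideanSpace ℝ (Fin n)) :
    eigProj A μ v = (Module.End.eigenspace (toEuclideanLin A) μ).starProjection v :=
  rfl

theorem inner_rho (ν : EuclideanSpace ℝ (Fin n)) (S : Finset (Fin n)) :
    ⟪ν, rho ν S⟫ = ‖rho ν S‖ ^ 2 := by
  rw [← real_inner_self_eq_norm_sq]
  simp only [PiLp.inner_apply, RCLike.inner_apply, conj_trivial]
  refine sum_congr rfl fun i _ => ?_
  by_cases hi : i ∈ S <;> simp [rho, hi]

theorem rho_ne_zero {ν : EuclideanSpace ℝ (Fin n)} (hν : ∀ i, 0 < ν i) {S : Finset (Fin n)}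
    (hS : S.Nonempty) : rho ν S ≠ 0 := by
  obtain ⟨i, hi⟩ := hS
  intro h
  have := congrArg (· i) h
  simp [rho, hi, (hν i).ne'] at this

variable {G : SimpleGraph (Fin n)} [DecidableRel G.Adj] {ν : EuclideanSpace ℝ (Fin n)} {lam0 : ℝ}

theorem eigSp_adjMatrix_eq_span (hG : G.Connected) (hν : ∀ i, 0 < ν i)
    (hPerron : G.adjMatrix ℝ *ᵥ ν = lam0 • ν) : eigSp (G.adjMatrix ℝ) lam0 = ℝ ∙ ν := by
  refine le_antisymm (fun w hw => ?_) ((Submodule.span_singleton_le_iff_mem _ _).mpr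
    (mem_eigSp_iff.mpr hPerron))
  obtain ⟨t, ht⟩ :=
    G.exists_eq_smul_of_adjMatrix_mulVec_eq_smul hG hν hPerron (mem_eigSp_iff.mp hw)
  exact Submodule.mem_span_singleton.mpr ⟨t, (WithLp.ofLp_injective 2 ht).symm⟩

theorem eigProj_adjMatrix_rho (hG : G.Connected) (hν : ∀ i, 0 < ν i)
    (hPerron : G.adjMatrix ℝ *ᵥ ν = lam0 • ν) (S : Finset (Fin n)) :
    eigProj (G.adjMatrix ℝ) lam0 (rho ν S) = (‖rho ν S‖ ^ 2 / ‖ν‖ ^ 2) • ν := by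
  rw [eigProj_eq_starProjection, ← eigSp, eigSp_adjMatrix_eq_span hG hν hPerron,
    Submodule.starProjection_singleton, inner_rho]
  rfl

theorem le_of_mem_evloc_adjMatrix (hν : ∀ i, 0 < ν i) (hPerron : G.adjMatrix ℝ *ᵥ ν = lam0 • ν)
    {S : Finset (Fin n)} {x : ℝ} (hx : x ∈ evloc (G.adjMatrix ℝ) ν S) : x ≤ lam0 := by
  have hw : eigProj (G.adjMatrix ℝ) x (rho ν S) ∈ eigSp (G.adjMatrix ℝ) x :=
    Submodule.starProjection_apply_mem _ _
  refine (le_abs_self x).trans (abs_le_of_mulVec_eq_smul_of_pos (fun i j => ?_) hν hPerron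
    (fun h => hx (WithLp.ofLp_injective 2 h)) (mem_eigSp_iff.mp hw))
  rw [SimpleGraph.adjMatrix_apply]
  split_ifs <;> norm_num

theorem perron_mem_evloc_adjMatrix (hG : G.Connected) (hν : ∀ i, 0 < ν i)
    (hPerron : G.adjMatrix ℝ *ᵥ ν = lam0 • ν) {S : Finset (Fin n)} (hS : S.Nonempty) :
    lam0 ∈ evloc (G.adjMatrix ℝ) ν S := by
  have := hS.to_type
  have hν0 := EuclideanSpace.ne_zero_of_forall_pos hν
  have hρ : ‖rho ν S‖ ≠ 0 := norm_ne_zero_iff.mpr (rho_ne_zero hν hS)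
  show eigProj _ _ _ ≠ 0
  rw [eigProj_adjMatrix_rho hG hν hPerron]
  exact smul_ne_zero (div_ne_zero (pow_ne_zero 2 hρ) (pow_ne_zero 2 (norm_ne_zero_iff.mpr hν0))) hν0

theorem apply_zero_eq_of_range_eq_evloc (hG : G.Connected) (hν : ∀ i, 0 < ν i)
    (hPerron : G.adjMatrix ℝ *ᵥ ν = lam0 • ν) {S : Finset (Fin n)} (hS : S.Nonempty) {d : ℕ}
    {μ : Fin (d + 1) → ℝ} (hμ : StrictAnti μ) (hμS : Set.range μ = evloc (G.adjMatrix ℝ) ν S) :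
    μ 0 = lam0 := by
  obtain ⟨l, hl⟩ : lam0 ∈ Set.range μ := hμS ▸ perron_mem_evloc_adjMatrix hG hν hPerron hS
  exact le_antisymm (le_of_mem_evloc_adjMatrix hν hPerron (hμS ▸ Set.mem_range_self 0))
    (hl ▸ hμ.antitone (Fin.zero_le l))

end LocalSpectrum

theorem piC_pos {d : ℕ} {μ : Fin (d + 1) → ℝ} (hμ : Function.Injective μ) (l : Fin (d + 1)) :
    0 < piC μ l :=
  prod_pos fun _ hh => abs_pos.mpr (sub_ne_zero.mpr (hμ.ne (ne_of_mem_erase hh).symm))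

theorem eval_prod_erase_zero_eq_piC {d : ℕ} {μ : Fin (d + 1) → ℝ} (hμ : StrictAnti μ) :
    (∏ l ∈ univ.erase 0, (X - Polynomial.C (μ l))).eval (μ 0) = piC μ 0 := by
  rw [eval_prod, piC]
  refine prod_congr rfl fun l hl => ?_
  have hlt : μ l < μ 0 := hμ (Fin.pos_of_ne_zero (ne_of_mem_erase hl))
  rw [eval_sub, eval_X, eval_C, abs_of_pos (sub_pos.mpr hlt)]

theorem local_hoffman_polynomial_general {n : ℕ} (G : SimpleGraph (Fin n)) [DecidableRel G.Adj]
    (hconn : G.Connected)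
    (ν : EuclideanSpace ℝ (Fin n)) (hν : ∀ i, 0 < ν i) (lam0 : ℝ)
    (hPerron : (G.adjMatrix ℝ).mulVec ν = lam0 • ν)
    (C : Finset (Fin n)) (hC : C.Nonempty)
    (d : ℕ) (μ : Fin (d + 1) → ℝ) (hμa : StrictAnti μ)
    (hμr : Set.range μ = evloc (G.adjMatrix ℝ) ν C) :
    aevalVec (G.adjMatrix ℝ)
      (Polynomial.C (‖ν‖ ^ 2 / (piC μ 0 * ‖rho ν C‖ ^ 2)) *
        ∏ l ∈ Finset.univ.erase 0, (Polynomial.X - Polynomial.C (μ l)))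
      (rho ν C) = ν := by
  have hT : (Matrix.toEuclideanLin (G.adjMatrix ℝ)).IsSymmetric :=
    Matrix.isSymmetric_toEuclideanLin_iff.mpr (G.isHermitian_adjMatrix ℝ)
  have hμ0 : μ 0 = lam0 := apply_zero_eq_of_range_eq_evloc hconn hν hPerron hC hμa hμr
  set p := ∏ l ∈ univ.erase 0, (X - Polynomial.C (μ l))
  have hvanish : ∀ x ≠ lam0, p.eval x • eigProj (G.adjMatrix ℝ) x (rho ν C) = 0 := by
    intro x hx
    by_cases hxμ : x ∈ Set.range μ
    · obtain ⟨l, rfl⟩ := hxμ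
      have hl : l ≠ 0 := by rintro rfl; exact hx hμ0
      rw [eval_prod, prod_eq_zero (mem_erase.mpr ⟨hl, mem_univ l⟩) (by simp), zero_smul]
    · rw [hμr] at hxμ
      rw [not_not.mp hxμ, smul_zero]
  rw [aevalVec_eq_aeval_toEuclideanLin, map_mul, aeval_C, Module.End.mul_apply,
    Module.algebraMap_end_apply, hT.aeval_apply_eq_eval_smul_starProjection hvanish,
    ← eigProj_eq_starProjection, ← hμ0, eval_prod_erase_zero_eq_piC hμa, hμ0,
    eigProj_adjMatrix_rho hconn hν hPerron, smul_smul, smul_smul]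
  have := hC.to_type
  have hρ : ‖rho ν C‖ ≠ 0 := norm_ne_zero_iff.mpr (rho_ne_zero hν hC)
  have hν0 : ‖ν‖ ≠ 0 := norm_ne_zero_iff.mpr (EuclideanSpace.ne_zero_of_forall_pos hν)
  have hπ : piC μ 0 ≠ 0 := (piC_pos hμa.injective 0).ne'
  rw [show ‖ν‖ ^ 2 / (piC μ 0 * ‖rho ν C‖ ^ 2) * piC μ 0 * (‖rho ν C‖ ^ 2 / ‖ν‖ ^ 2) = 1 by
    field_simp, one_smul]

theorem local_hoffman_polynomial {n : ℕ} (hn : 0 < n) (G : SimpleGraph (Fin n)) [DecidableRel G.Adj]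
    (hconn : G.Connected)
    (ν : EuclideanSpace ℝ (Fin n)) (hν : ∀ i, 0 < ν i) (lam0 : ℝ)
    (hPerron : (G.adjMatrix ℝ).mulVec ν = lam0 • ν)
    (C : Finset (Fin n)) (hC : C.Nonempty)
    (d : ℕ) (μ : Fin (d + 1) → ℝ) (hμa : StrictAnti μ)
    (hμr : Set.range μ = evloc (G.adjMatrix ℝ) ν C) :
    aevalVec (G.adjMatrix ℝ)
      (Polynomial.C (‖ν‖ ^ 2 / (piC μ 0 * ‖rho ν C‖ ^ 2)) *
        ∏ l ∈ Finset.univ.erase 0, (Polynomial.X - Polynomial.C (μ l)))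
      (rho ν C) = ν :=
  local_hoffman_polynomial_general G hconn ν hν lam0 hPerron C hC d μ hμa hμr
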